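/- arXiv:1302.4200 — 8 statements merged into one kernel-verified Lean document; each statement's English description precedes it below -/
import Mathlib

section
/- Let P be a topological property such that (a) every space with P is m_i (has a closure-preserving local base/quasi-base/cushioned local pairbase at every point), and (b) if X has P and A is a closed subspace, then the quotient X/A (collapsing A to a point) has P. Then every space X with property P is s-m_i, i.e., has the corresponding closure-preserving local structure at every closed set. -/
open Set Topology Cardinal

universe u

/-- A family of sets is closure-preserving if the closure of the union of any
subfamily equals the union of the closures. -/
def ClosurePreserving {X : Type*} [TopologicalSpace X] (P : Set (Set X)) : Prop :=
  ∀ P' ⊆ P, closure (⋃₀ P') = ⋃ B ∈ P', closure B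

/-- A family of open sets is a neighborhood base at the set `F`. -/
def IsNbhdBaseAt {X : Type*} [TopologicalSpace X] (B : Set (Set X)) (F : Set X) : Prop :=
  (∀ V ∈ B, IsOpen V ∧ F ⊆ V) ∧ ∀ U : Set X, IsOpen U → F ⊆ U → ∃ V ∈ B, V ⊆ U

/-- `X` is s-m₁: every closed set has a closure-preserving open neighborhood base. -/
def SM1 (X : Type*) [TopologicalSpace X] : Prop :=
  ∀ F : Set X, IsClosed F → ∃ B : Set (Set X), IsNbhdBaseAt B F ∧ ClosurePreserving B

/-- `X` is m₁ at `x`: there is a closure-preserving local base of open sets at `x`. -/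
def M1At {X : Type*} [TopologicalSpace X] (x : X) : Prop :=
  ∃ B : Set (Set X), (∀ V ∈ B, IsOpen V ∧ x ∈ V) ∧
    (∀ U : Set X, IsOpen U → x ∈ U → ∃ V ∈ B, V ⊆ U) ∧ ClosurePreserving B

/-- `X` is m₂ at `x`: a closure-preserving local quasi-base at `x`. -/
def M2At {X : Type*} [TopologicalSpace X] (x : X) : Prop :=
  ∃ Q : Set (Set X), (∀ B ∈ Q, x ∈ interior B) ∧
    (∀ U : Set X, IsOpen U → x ∈ U → ∃ B ∈ Q, B ⊆ U) ∧ ClosurePreserving Q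

/-- A family of pairs is cushioned. -/
def Cushioned {X : Type*} [TopologicalSpace X] (P : Set (Set X × Set X)) : Prop :=
  ∀ P' ⊆ P, closure (⋃ p ∈ P', p.1) ⊆ ⋃ p ∈ P', p.2

/-- `X` is m₃ at `x`: a cushioned local pairbase at `x`. -/
def M3At {X : Type*} [TopologicalSpace X] (x : X) : Prop :=
  ∃ P : Set (Set X × Set X), (∀ p ∈ P, IsOpen p.1 ∧ x ∈ p.1 ∧ p.1 ⊆ p.2) ∧
    (∀ U : Set X, IsOpen U → x ∈ U → ∃ p ∈ P, p.2 ⊆ U) ∧ Cushioned P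

/-- `X` is s-m₂: every closed set has a closure-preserving local quasi-base. -/
def SM2 (X : Type*) [TopologicalSpace X] : Prop :=
  ∀ F : Set X, IsClosed F → ∃ Q : Set (Set X), (∀ B ∈ Q, F ⊆ interior B) ∧
    (∀ U : Set X, IsOpen U → F ⊆ U → ∃ B ∈ Q, B ⊆ U) ∧ ClosurePreserving Q

/-- `X` is s-m₃: every closed set has a cushioned local pairbase. -/
def SM3 (X : Type*) [TopologicalSpace X] : Prop :=
  ∀ F : Set X, IsClosed F → ∃ P : Set (Set X × Set X),
    (∀ p ∈ P, IsOpen p.1 ∧ F ⊆ p.1 ∧ p.1 ⊆ p.2) ∧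
    (∀ U : Set X, IsOpen U → F ⊆ U → ∃ p ∈ P, p.2 ⊆ U) ∧ Cushioned P

/-- The setoid on `X` identifying all points of `A` to one point. -/
def collapseSetoid {X : Type*} (A : Set X) : Setoid X where
  r x y := x = y ∨ (x ∈ A ∧ y ∈ A)
  iseqv := ⟨fun _ => Or.inl rfl, by tauto, by
    rintro x y z (rfl | ⟨hx, hy⟩) (rfl | ⟨hy', hz⟩) <;> tauto⟩

/-!
Collapse a nonempty closed set `F` to a point `∗` of `X/F`. The quotient map `π` is continuous,
and an open set containing `F` is the preimage of its image, which is an open neighbourhood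
of `∗`; so the preimages of a local base (quasi-base, pairbase) at `∗` form one at `F`.
Cushioning survives pullback along any continuous map, and closure-preservation survives because
`π ⁻¹' closure S ⊆ closure (π ⁻¹' S)` whenever `∗ ∈ S`. For `F = ∅` the family `{∅}` works.
-/

section Collapse

variable {X : Type*} {A : Set X}

local notation "π" => Quotient.mk (collapseSetoid A)

theorem preimage_image_mk_collapseSetoid {U : Set X} (h : A ⊆ U ∨ Disjoint U A) :
    π ⁻¹' (π '' U) = U := by
  refine subset_antisymm ?_ (subset_preimage_image _ _)
  rintro x ⟨u, hu, hux⟩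
  rcases Quotient.exact hux with rfl | ⟨huA, hxA⟩
  · exact hu
  · rcases h with hAU | hUA
    · exact hAU hxA
    · exact absurd huA (hUA.notMem_of_mem_left hu)

theorem isOpen_image_mk_collapseSetoid [TopologicalSpace X] {U : Set X} (hU : IsOpen U)
    (h : A ⊆ U ∨ Disjoint U A) : IsOpen (π '' U) := by
  rw [← preimage_image_mk_collapseSetoid h] at hU
  exact hU

theorem subset_preimage_of_mk_mem {V : Set (Quotient (collapseSetoid A))} {x₀ : X}
    (hx₀ : x₀ ∈ A) (hV : π x₀ ∈ V) : A ⊆ π ⁻¹' V := fun a ha => by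
  rwa [mem_preimage, Quotient.sound (Or.inr ⟨ha, hx₀⟩ : collapseSetoid A a x₀)]

/-- For `o` open, `o \ A` is open and saturated, so its image is an open neighbourhood in `X/A`. -/
theorem preimage_closure_subset_closure_preimage_mk [TopologicalSpace X] (hA : IsClosed A)
    {S : Set (Quotient (collapseSetoid A))} (hS : A ⊆ π ⁻¹' S) :
    π ⁻¹' closure S ⊆ closure (π ⁻¹' S) := by
  intro x hx
  by_cases hxA : x ∈ A
  · exact subset_closure (hS hxA)
  rw [mem_closure_iff]
  intro o ho hxo
  have hopen : IsOpen (π '' (o \ A)) :=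
    isOpen_image_mk_collapseSetoid (ho.sdiff hA) (Or.inr disjoint_sdiff_left)
  obtain ⟨_, ⟨u, hu, rfl⟩, huS⟩ := mem_closure_iff.mp hx _ hopen ⟨x, ⟨hxo, hxA⟩, rfl⟩
  exact ⟨u, hu.1, huS⟩

end Collapse

section Pullback

variable {X Y : Type*} [TopologicalSpace X] [TopologicalSpace Y]

theorem closurePreserving_singleton (V : Set X) : ClosurePreserving {V} := by
  intro P' hP'
  rcases subset_singleton_iff_eq.mp hP' with rfl | rfl <;> simp

theorem cushioned_singleton {p : Set X × Set X} (hp : closure p.1 ⊆ p.2) : Cushioned {p} := by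
  intro P' hP'
  rcases subset_singleton_iff_eq.mp hP' with rfl | rfl <;> simp [hp]

theorem ClosurePreserving.preimage {f : X → Y} (hf : Continuous f) {B : Set (Set Y)}
    (hB : ClosurePreserving B) (hclosure : ∀ V ∈ B, f ⁻¹' closure V ⊆ closure (f ⁻¹' V)) :
    ClosurePreserving (preimage f '' B) := by
  intro P' hP'
  obtain ⟨B', hB'B, rfl⟩ := subset_image_iff.mp hP'
  refine subset_antisymm ?_ (iUnion₂_subset fun S hS => closure_mono (subset_sUnion_of_mem hS))
  rw [sUnion_image, biUnion_image, ← preimage_iUnion₂, ← sUnion_eq_biUnion]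
  calc closure (f ⁻¹' ⋃₀ B') ⊆ f ⁻¹' closure (⋃₀ B') := hf.closure_preimage_subset _
    _ = ⋃ V ∈ B', f ⁻¹' closure V := by rw [hB B' hB'B, preimage_iUnion₂]
    _ ⊆ ⋃ V ∈ B', closure (f ⁻¹' V) := iUnion₂_mono fun V hV => hclosure V (hB'B hV)

theorem Cushioned.preimage {f : X → Y} (hf : Continuous f) {P : Set (Set Y × Set Y)}
    (hP : Cushioned P) : Cushioned ((fun p => (f ⁻¹' p.1, f ⁻¹' p.2)) '' P) := by
  intro P' hP'
  obtain ⟨P'', hP''P, rfl⟩ := subset_image_iff.mp hP'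
  simp only [biUnion_image, ← preimage_iUnion₂]
  exact (hf.closure_preimage_subset _).trans (preimage_mono (hP P'' hP''P))

end Pullback

section Transfer

variable {X : Type*} [TopologicalSpace X] {A : Set X} {x₀ : X}

local notation "π" => Quotient.mk (collapseSetoid A)

theorem exists_mem_preimage_mk_subset {ι : Type*} {s : Set ι}
    {g : ι → Set (Quotient (collapseSetoid A))} (hx₀ : x₀ ∈ A)
    (hbase : ∀ U, IsOpen U → π x₀ ∈ U → ∃ i ∈ s, g i ⊆ U) {U : Set X} (hU : IsOpen U)
    (hAU : A ⊆ U) : ∃ i ∈ s, π ⁻¹' g i ⊆ U := by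
  obtain ⟨i, hi, hiU⟩ :=
    hbase _ (isOpen_image_mk_collapseSetoid hU (Or.inl hAU)) (mem_image_of_mem _ (hAU hx₀))
  exact ⟨i, hi, (preimage_mono hiU).trans (preimage_image_mk_collapseSetoid (Or.inl hAU)).subset⟩

theorem exists_closurePreserving_nbhdBase_of_m1At_mk (hA : IsClosed A) (hx₀ : x₀ ∈ A)
    (h : M1At (π x₀)) : ∃ B : Set (Set X), IsNbhdBaseAt B A ∧ ClosurePreserving B := by
  obtain ⟨B, hB_nhds, hB_base, hB_cp⟩ := h
  have hsub : ∀ V ∈ B, A ⊆ π ⁻¹' V := fun V hV => subset_preimage_of_mk_mem hx₀ (hB_nhds V hV).2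
  refine ⟨preimage π '' B, ⟨?_, fun U hU hAU => ?_⟩, hB_cp.preimage continuous_quot_mk
    fun V hV => preimage_closure_subset_closure_preimage_mk hA (hsub V hV)⟩
  · rintro _ ⟨V, hV, rfl⟩
    exact ⟨(hB_nhds V hV).1.preimage continuous_quot_mk, hsub V hV⟩
  · obtain ⟨V, hV, hVU⟩ := exists_mem_preimage_mk_subset (g := id) hx₀ hB_base hU hAU
    exact ⟨_, mem_image_of_mem _ hV, hVU⟩

theorem exists_closurePreserving_quasiBase_of_m2At_mk (hA : IsClosed A) (hx₀ : x₀ ∈ A)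
    (h : M2At (π x₀)) : ∃ Q : Set (Set X), (∀ B ∈ Q, A ⊆ interior B) ∧
      (∀ U : Set X, IsOpen U → A ⊆ U → ∃ B ∈ Q, B ⊆ U) ∧ ClosurePreserving Q := by
  obtain ⟨Q, hQ_int, hQ_base, hQ_cp⟩ := h
  have hsub_int : ∀ V ∈ Q, A ⊆ π ⁻¹' interior V :=
    fun V hV => subset_preimage_of_mk_mem hx₀ (hQ_int V hV)
  refine ⟨preimage π '' Q, ?_, fun U hU hAU => ?_, hQ_cp.preimage continuous_quot_mk
    fun V hV => preimage_closure_subset_closure_preimage_mk hA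
      ((hsub_int V hV).trans (preimage_mono interior_subset))⟩
  · rintro _ ⟨V, hV, rfl⟩
    exact (hsub_int V hV).trans (preimage_interior_subset_interior_preimage continuous_quot_mk)
  · obtain ⟨V, hV, hVU⟩ := exists_mem_preimage_mk_subset (g := id) hx₀ hQ_base hU hAU
    exact ⟨_, mem_image_of_mem _ hV, hVU⟩

theorem exists_cushioned_pairBase_of_m3At_mk (hx₀ : x₀ ∈ A) (h : M3At (π x₀)) :
    ∃ P : Set (Set X × Set X), (∀ p ∈ P, IsOpen p.1 ∧ A ⊆ p.1 ∧ p.1 ⊆ p.2) ∧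
      (∀ U : Set X, IsOpen U → A ⊆ U → ∃ p ∈ P, p.2 ⊆ U) ∧ Cushioned P := by
  obtain ⟨P, hP_nhds, hP_base, hP_cush⟩ := h
  refine ⟨_, ?_, fun U hU hAU => ?_, hP_cush.preimage (continuous_quot_mk (r := collapseSetoid A))⟩
  · rintro _ ⟨p, hp, rfl⟩
    obtain ⟨hp_open, hp_mem, hp_sub⟩ := hP_nhds p hp
    exact ⟨hp_open.preimage continuous_quot_mk, subset_preimage_of_mk_mem hx₀ hp_mem,
      preimage_mono hp_sub⟩
  · obtain ⟨p, hp, hpU⟩ := exists_mem_preimage_mk_subset (g := Prod.snd) hx₀ hP_base hU hAU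
    exact ⟨_, mem_image_of_mem _ hp, hpU⟩

end Transfer

/-- If a topological property `P` (a) implies being an `mᵢ`-space and (b) is preserved by
collapsing a closed set to a point, then every space with `P` is an `s`-`mᵢ`-space
(for `i = 1, 2, 3`). -/
theorem property_preserved_by_quotients_gives_s_version
    {P : (Y : Type u) → [TopologicalSpace Y] → Prop}
    (hb : ∀ (Y : Type u) [TopologicalSpace Y] (A : Set Y), IsClosed A → P Y →
      P (Quotient (collapseSetoid A)))
    (X : Type u) [TopologicalSpace X] (hX : P X) :
    ((∀ (Y : Type u) [TopologicalSpace Y], P Y → ∀ y : Y, M1At y) → SM1 X) ∧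
    ((∀ (Y : Type u) [TopologicalSpace Y], P Y → ∀ y : Y, M2At y) → SM2 X) ∧
    ((∀ (Y : Type u) [TopologicalSpace Y], P Y → ∀ y : Y, M3At y) → SM3 X) := by
  refine ⟨fun hm F hF => ?_, fun hm F hF => ?_, fun hm F hF => ?_⟩ <;>
    rcases F.eq_empty_or_nonempty with rfl | ⟨x₀, hx₀⟩
  · exact ⟨{∅}, ⟨by simp, fun U _ _ => ⟨∅, rfl, empty_subset U⟩⟩, closurePreserving_singleton ∅⟩
  · exact exists_closurePreserving_nbhdBase_of_m1At_mk hF hx₀ (hm _ (hb X F hF hX) _)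
  · exact ⟨{∅}, by simp, fun U _ _ => ⟨∅, rfl, empty_subset U⟩, closurePreserving_singleton ∅⟩
  · exact exists_closurePreserving_quasiBase_of_m2At_mk hF hx₀ (hm _ (hb X F hF hX) _)
  · exact ⟨{(∅, ∅)}, by simp, fun U _ _ => ⟨(∅, ∅), rfl, empty_subset U⟩,
      cushioned_singleton (by simp)⟩
  · exact exists_cushioned_pairBase_of_m3At_mk hx₀ (hm _ (hb X F hF hX) _)
end

section
/- Every T₁ regular topological space with only finitely many non-isolated points is an s-m₁-space: every closed subset F has a closure-preserving family of open sets forming a neighborhood base at F. -/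
/-!
Let `D` be the finite set of non-isolated points and `F` closed. For every `d ∈ D \ F`, regularity
gives an open `W d ⊇ F ∪ (D \ {d})` whose closure misses `d`. Take as base at `F` the open
`V ⊇ F` with `V ⊆ W d` for every `d ∈ D \ V`. Any union of such sets is closed: a point of its
closure outside it is non-isolated, hence some `d ∈ D \ F` missed by every member, and then the
union lies in `W d`. A family all of whose unions are closed is closure-preserving. It is a base
because `U ∩ ⋂_{d ∈ D \ U} W d` is open (the intersection is finite) and belongs to the family.
-/

open Set Topology Cardinal

universe u

section

variable {X : Type*} [TopologicalSpace X]

theorem closure_subset_union_setOf_not_isOpen_singleton (A : Set X) :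
    closure A ⊆ A ∪ {x | ¬IsOpen ({x} : Set X)} := by
  intro x hx
  by_cases hiso : IsOpen ({x} : Set X)
  · obtain ⟨y, rfl, hyA⟩ := mem_closure_iff.mp hx {x} hiso rfl
    exact Or.inl hyA
  · exact Or.inr hiso

theorem ClosurePreserving.of_forall_isClosed_sUnion {P : Set (Set X)}
    (hP : ∀ P' ⊆ P, IsClosed (⋃₀ P')) : ClosurePreserving P := by
  intro P' hP'
  refine subset_antisymm ?_ (iUnion₂_subset fun V hV => closure_mono (subset_sUnion_of_mem hV))
  rw [(hP P' hP').closure_eq, sUnion_eq_biUnion]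
  exact iUnion₂_mono fun V _ => subset_closure

theorem exists_isOpen_superset_notMem_closure [RegularSpace X] {C : Set X} {x : X}
    (hC : IsClosed C) (hx : x ∉ C) : ∃ W, IsOpen W ∧ C ⊆ W ∧ x ∉ closure W := by
  obtain ⟨U, W, hU, hW, hxU, hCW, hUW⟩ :=
    SeparatedNhds.of_isCompact_isClosed isCompact_singleton hC (disjoint_singleton_left.mpr hx)
  exact ⟨W, hW, hCW, disjoint_left.mp (hUW.closure_right hU) (hxU rfl)⟩

def subordinateOpenNbhds (F D : Set X) (W : X → Set X) : Set (Set X) :=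
  {V | IsOpen V ∧ F ⊆ V ∧ ∀ d ∈ D \ V, V ⊆ W d}

variable {F D : Set X} {W : X → Set X}

theorem isClosed_sUnion_of_subset_subordinateOpenNbhds
    (hD : {x | ¬IsOpen ({x} : Set X)} ⊆ D) (hW : ∀ d ∈ D \ F, d ∉ closure (W d))
    {P : Set (Set X)} (hP : P ⊆ subordinateOpenNbhds F D W) : IsClosed (⋃₀ P) := by
  refine isClosed_of_closure_subset fun x hx => by_contra fun hxP => ?_
  have hxD : x ∈ D :=
    hD ((closure_subset_union_setOf_not_isOpen_singleton _ hx).resolve_left hxP)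
  have hxF : x ∉ F := by
    obtain ⟨V, hVP, -⟩ := nonempty_sUnion.mp (closure_nonempty_iff.mp ⟨x, hx⟩)
    exact fun hxF => hxP ⟨V, hVP, (hP hVP).2.1 hxF⟩
  have hPW : ⋃₀ P ⊆ W x := sUnion_subset fun V hV =>
    (hP hV).2.2 x ⟨hxD, fun hxV => hxP ⟨V, hV, hxV⟩⟩
  exact hW x ⟨hxD, hxF⟩ (closure_mono hPW hx)

theorem isNbhdBaseAt_subordinateOpenNbhds (hD : D.Finite)
    (hW : ∀ d ∈ D \ F, IsOpen (W d) ∧ F ∪ (D \ {d}) ⊆ W d) :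
    IsNbhdBaseAt (subordinateOpenNbhds F D W) F := by
  refine ⟨fun V hV => ⟨hV.1, hV.2.1⟩, fun U hU hFU => ?_⟩
  have hmissed : ∀ d ∈ D \ U, d ∈ D \ F := fun d hd => ⟨hd.1, fun hdF => hd.2 (hFU hdF)⟩
  refine ⟨U ∩ ⋂ d ∈ D \ U, W d, ⟨?_, ?_, ?_⟩, inter_subset_left⟩
  · exact hU.inter ((hD.subset sdiff_subset).isOpen_biInter fun d hd => (hW d (hmissed d hd)).1)
  · exact subset_inter hFU (subset_iInter₂ fun d hd => subset_union_left.trans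
      (hW d (hmissed d hd)).2)
  · rintro d ⟨hdD, hdV⟩
    by_cases hdU : d ∈ U
    · -- `d` lies in every `W d'` with `d' ∈ D \ U`, since `d ≠ d'`
      refine absurd ⟨hdU, mem_iInter₂.mpr fun d' hd' => (hW d' (hmissed d' hd')).2 ?_⟩ hdV
      exact Or.inr ⟨hdD, fun h => hd'.2 (h ▸ hdU)⟩
    · exact inter_subset_right.trans (iInter₂_subset d ⟨hdD, hdU⟩)

end

/-- Every T₁ regular space with only finitely many non-isolated points is an s-m₁-space. -/
theorem finitely_many_nonisolated_implies_sM1 {X : Type*} [TopologicalSpace X]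
    [T1Space X] [RegularSpace X]
    (hfin : {x : X | ¬ IsOpen ({x} : Set X)}.Finite) : SM1 X := by
  intro F hF
  set D := {x : X | ¬ IsOpen ({x} : Set X)}
  have hsep : ∀ d ∈ D \ F, ∃ W, IsOpen W ∧ F ∪ (D \ {d}) ⊆ W ∧ d ∉ closure W := fun d hd =>
    exists_isOpen_superset_notMem_closure (hF.union (hfin.subset sdiff_subset).isClosed)
      fun h => h.elim hd.2 fun hd' => hd'.2 rfl
  choose! W hWo hFW hdW using hsep
  exact ⟨subordinateOpenNbhds F D W,
    isNbhdBaseAt_subordinateOpenNbhds hfin fun d hd => ⟨hWo d hd, hFW d hd⟩,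
    .of_forall_isClosed_sUnion fun _ hP =>
      isClosed_sUnion_of_subset_subordinateOpenNbhds subset_rfl hdW hP⟩
end

section
/- Let f : X → Y be a continuous surjective map that is both quasi-open and closed. If ℬ is a closure-preserving family of open subsets of X, then the family {int(f(B)) : B ∈ ℬ} is a closure-preserving family of open subsets of Y. -/
open Set Topology Cardinal

universe u

/-!
For open `V`, quasi-openness and continuity give `f '' closure V ⊆ closure (interior (f '' V))`:
every open `W` meeting `f '' V` pulls back to a non-empty open subset of `V`, whose image has
interior inside `W ∩ interior (f '' V)`. Given a subfamily `P'` of the images, pick the members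
`B'` of `B` mapping into it; since `f` is closed and `B` closure-preserving,
`closure (⋃₀ P') ⊆ f '' closure (⋃₀ B') = ⋃ V ∈ B', f '' closure V`, and each term lies in the
closure of `interior (f '' V) ∈ P'`.
-/

section

variable {X Y : Type*} [TopologicalSpace X] [TopologicalSpace Y]

def IsQuasiOpenMap (f : X → Y) : Prop :=
  ∀ U : Set X, IsOpen U → U.Nonempty → (interior (f '' U)).Nonempty

theorem closurePreserving_of_closure_sUnion_subset {P : Set (Set X)}
    (h : ∀ P' ⊆ P, closure (⋃₀ P') ⊆ ⋃ B ∈ P', closure B) : ClosurePreserving P :=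
  fun P' hP' => (h P' hP').antisymm <|
    iUnion₂_subset fun _ hB => closure_mono (subset_sUnion_of_mem hB)

theorem IsQuasiOpenMap.closure_image_subset_closure_interior_image {f : X → Y}
    (hqo : IsQuasiOpenMap f) (hc : Continuous f) {V : Set X} (hV : IsOpen V) :
    closure (f '' V) ⊆ closure (interior (f '' V)) := by
  intro y hy
  rw [mem_closure_iff] at hy ⊢
  intro W hW hyW
  have hpre : IsOpen (f ⁻¹' W ∩ V) := (hW.preimage hc).inter hV
  have hne : (f ⁻¹' W ∩ V).Nonempty := by
    obtain ⟨_, hzW, x, hxV, rfl⟩ := hy W hW hyW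
    exact ⟨x, hzW, hxV⟩
  obtain ⟨z, hz⟩ := hqo _ hpre hne
  obtain ⟨x, hx, rfl⟩ := interior_subset hz
  exact ⟨f x, hx.1, interior_mono (image_mono inter_subset_right) hz⟩

theorem IsQuasiOpenMap.image_closure_subset_closure_interior_image {f : X → Y}
    (hqo : IsQuasiOpenMap f) (hc : Continuous f) {V : Set X} (hV : IsOpen V) :
    f '' closure V ⊆ closure (interior (f '' V)) :=
  (image_closure_subset_closure_image hc).trans
    (hqo.closure_image_subset_closure_interior_image hc hV)

theorem ClosurePreserving.image_of_isClosedMap {f : X → Y} (hcl : IsClosedMap f)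
    {B : Set (Set X)} (hB : ClosurePreserving B) (g : Set X → Set Y)
    (hg_sub : ∀ V ∈ B, g V ⊆ f '' V) (hg_closure : ∀ V ∈ B, f '' closure V ⊆ closure (g V)) :
    ClosurePreserving (g '' B) := by
  refine closurePreserving_of_closure_sUnion_subset fun P' hP' => ?_
  set B' : Set (Set X) := {V ∈ B | g V ∈ P'}
  have hB'B : B' ⊆ B := fun _ hV => hV.1
  have hsub : ⋃₀ P' ⊆ f '' ⋃₀ B' := by
    rintro y ⟨W, hW, hyW⟩
    obtain ⟨V, hVB, rfl⟩ := hP' hW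
    obtain ⟨x, hx, rfl⟩ := hg_sub V hVB hyW
    exact ⟨x, ⟨V, ⟨hVB, hW⟩, hx⟩, rfl⟩
  calc closure (⋃₀ P') ⊆ f '' closure (⋃₀ B') :=
        (closure_mono hsub).trans (hcl.closure_image_subset _)
    _ = ⋃ V ∈ B', f '' closure V := by rw [hB B' hB'B, image_iUnion₂]
    _ ⊆ ⋃ W ∈ P', closure W :=
        iUnion₂_subset fun V hV => (hg_closure V hV.1).trans (subset_biUnion_of_mem hV.2)

end

theorem quasiOpen_closed_image_closurePreserving_general {X Y : Type*}
    [TopologicalSpace X] [TopologicalSpace Y] (f : X → Y)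
    (hc : Continuous f)
    (hqo : ∀ U : Set X, IsOpen U → U.Nonempty → (interior (f '' U)).Nonempty)
    (hcl : IsClosedMap f)
    (B : Set (Set X)) (hopen : ∀ V ∈ B, IsOpen V) (hcp : ClosurePreserving B) :
    (∀ W ∈ (fun V => interior (f '' V)) '' B, IsOpen W) ∧
    ClosurePreserving ((fun V => interior (f '' V)) '' B) := by
  have hqo' : IsQuasiOpenMap f := hqo
  refine ⟨?_, hcp.image_of_isClosedMap hcl _ (fun _ _ => interior_subset)
    fun V hV => hqo'.image_closure_subset_closure_interior_image hc (hopen V hV)⟩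
  rintro _ ⟨V, -, rfl⟩
  exact isOpen_interior

/-- If `f` is a continuous, surjective, quasi-open, closed map and `B` is a
closure-preserving family of open sets of `X`, then `{int (f '' V) | V ∈ B}` is a
closure-preserving family of open sets of `Y`. -/
theorem quasiOpen_closed_image_closurePreserving {X Y : Type*}
    [TopologicalSpace X] [TopologicalSpace Y] (f : X → Y)
    (hc : Continuous f) (hs : Function.Surjective f)
    (hqo : ∀ U : Set X, IsOpen U → U.Nonempty → (interior (f '' U)).Nonempty)
    (hcl : IsClosedMap f)
    (B : Set (Set X)) (hopen : ∀ V ∈ B, IsOpen V) (hcp : ClosurePreserving B) :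
    (∀ W ∈ (fun V => interior (f '' V)) '' B, IsOpen W) ∧
    ClosurePreserving ((fun V => interior (f '' V)) '' B) :=
  quasiOpen_closed_image_closurePreserving_general f hc hqo hcl B hopen hcp
end

section
/- Suppose every closed subset F of a space X has a σ-closure-preserving outer base ℬ = ⋃ₙ ℬₙ of open sets with each ℬₙ closure-preserving and ℬₙ ⊆ ℬₙ₊₁, and X is compact. Then every closed F ⊆ X has a σ-closure-preserving open neighborhood base: namely the sets ⋃ℬ′ where ℬ′ is a finite subfamily of some ℬₙ covering F. In particular, every Eberlein compact space is an s-σ-m₁-space. -/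
/-! Unions of subfamilies of a closure-preserving family `P` again form a closure-preserving
family: the members of `P` lying inside some of these unions already cover all of them.
For the base property, compactness of `F` picks finitely many members of the outer base inside
`U` covering `F`, and since the `B n` increase these all lie in a single `B n`. -/

open Set Topology Cardinal

universe u

section

variable {X : Type*} [TopologicalSpace X]

theorem closurePreserving_iff_closure_sUnion_subset {P : Set (Set X)} :
    ClosurePreserving P ↔ ∀ P' ⊆ P, closure (⋃₀ P') ⊆ ⋃ B ∈ P', closure B :=
  forall₂_congr fun _ _ => ⟨Eq.subset, fun h => h.antisymm <|
    iUnion₂_subset fun _ hB => closure_mono (subset_sUnion_of_mem hB)⟩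

theorem ClosurePreserving.mono {P Q : Set (Set X)} (hP : ClosurePreserving P) (hQP : Q ⊆ P) :
    ClosurePreserving Q :=
  fun P' hP' => hP P' (hP'.trans hQP)

theorem ClosurePreserving.sUnion_subfamilies {P : Set (Set X)} (hP : ClosurePreserving P) :
    ClosurePreserving {W | ∃ Q ⊆ P, ⋃₀ Q = W} := by
  refine closurePreserving_iff_closure_sUnion_subset.2 fun 𝒲 h𝒲 => ?_
  set Q := {V ∈ P | ∃ W ∈ 𝒲, V ⊆ W}
  have h𝒲Q : ⋃₀ 𝒲 ⊆ ⋃₀ Q := by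
    rintro x ⟨W, hW, hxW⟩
    obtain ⟨Q₀, hQ₀P, rfl⟩ := h𝒲 hW
    obtain ⟨V, hV, hxV⟩ := hxW
    exact ⟨V, ⟨hQ₀P hV, _, hW, subset_sUnion_of_mem hV⟩, hxV⟩
  calc closure (⋃₀ 𝒲) ⊆ closure (⋃₀ Q) := closure_mono h𝒲Q
    _ = ⋃ V ∈ Q, closure V := hP Q (sep_subset _ _)
    _ ⊆ ⋃ W ∈ 𝒲, closure W := iUnion₂_subset fun _ ⟨_, W, hW, hVW⟩ =>
      (closure_mono hVW).trans (subset_iUnion₂ (s := fun W _ => closure W) W hW)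

theorem IsCompact.exists_finite_subfamily_covering {F : Set X} (hF : IsCompact F)
    {𝒱 : Set (Set X)} (hopen : ∀ V ∈ 𝒱, IsOpen V)
    (hcover : F ⊆ ⋃₀ 𝒱) : ∃ 𝒱' ⊆ 𝒱, 𝒱'.Finite ∧ F ⊆ ⋃₀ 𝒱' := by
  rw [sUnion_eq_biUnion] at hcover
  simpa only [sUnion_eq_biUnion] using hF.elim_finite_subcover_image hopen hcover

theorem IsCompact.exists_finite_subfamily_covering_of_monotone {ι : Type*} [Preorder ι]
    [IsDirectedOrder ι] [Nonempty ι] {F U : Set X}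
    (hF : IsCompact F) {B : ι → Set (Set X)} (hB : Monotone B)
    (hopen : ∀ i, ∀ V ∈ B i, IsOpen V) (houter : ∀ x ∈ F, ∃ i, ∃ V ∈ B i, x ∈ V ∧ V ⊆ U) :
    ∃ i, ∃ B' ⊆ B i, B'.Finite ∧ F ⊆ ⋃₀ B' ∧ ⋃₀ B' ⊆ U := by
  obtain ⟨B', hB'U, hfin, hFB'⟩ := hF.exists_finite_subfamily_covering
    (𝒱 := {V | (∃ i, V ∈ B i) ∧ V ⊆ U}) (fun V ⟨⟨i, hV⟩, _⟩ => hopen i V hV)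
    fun x hx => by
      obtain ⟨i, V, hV, hxV, hVU⟩ := houter x hx
      exact ⟨V, ⟨⟨i, hV⟩, hVU⟩, hxV⟩
  obtain ⟨i, hi⟩ := hB.directed_le.exists_mem_subset_of_finset_subset_biUnion
    (s := hfin.toFinset) fun V hV => mem_iUnion.2 (hB'U (hfin.mem_toFinset.1 hV)).1
  exact ⟨i, B', by simpa using hi, hfin, hFB', sUnion_subset fun V hV => (hB'U hV).2⟩

end

/-- In a compact space, if a closed set `F` has a σ-closure-preserving outer base
`⋃ n, B n` of open sets with each `B n` closure-preserving and `B n ⊆ B (n+1)`, then the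
finite unions of members of the `B n` covering `F` form a σ-closure-preserving open
neighborhood base at `F`.  In particular, every Eberlein compact space (where every closed
set has such an outer base) is an s-σ-m₁-space. -/
theorem compact_sigma_cp_outer_base_gives_sigma_cp_nbhd_base {X : Type*}
    [TopologicalSpace X] [CompactSpace X]
    (F : Set X) (hF : IsClosed F) (B : ℕ → Set (Set X))
    (hcp : ∀ n, ClosurePreserving (B n))
    (hmono : ∀ n, B n ⊆ B (n + 1))
    (hopen : ∀ n, ∀ V ∈ B n, IsOpen V)
    (houter : ∀ x ∈ F, ∀ U : Set X, IsOpen U → x ∈ U → ∃ n, ∃ V ∈ B n, x ∈ V ∧ V ⊆ U) :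
    ∀ P : (ℕ → Set (Set X)),
      (P = fun n => {W | ∃ B' : Set (Set X), B' ⊆ B n ∧ B'.Finite ∧ F ⊆ ⋃₀ B' ∧ W = ⋃₀ B'}) →
      (∀ n, ClosurePreserving (P n)) ∧
      (∀ n, ∀ W ∈ P n, IsOpen W ∧ F ⊆ W) ∧
      (∀ U : Set X, IsOpen U → F ⊆ U → ∃ n, ∃ W ∈ P n, W ⊆ U) := by
  rintro P rfl
  refine ⟨fun n => (hcp n).sUnion_subfamilies.mono ?_, ?_, fun U hU hFU => ?_⟩
  · rintro _ ⟨B', hB', -, -, rfl⟩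
    exact ⟨B', hB', rfl⟩
  · rintro n _ ⟨B', hB', -, hFB', rfl⟩
    exact ⟨isOpen_sUnion fun V hV => hopen n V (hB' hV), hFB'⟩
  · obtain ⟨n, B', hB', hfin, hFB', hB'U⟩ :=
      hF.isCompact.exists_finite_subfamily_covering_of_monotone (monotone_nat_of_le_succ hmono)
        hopen fun x hx => houter x hx U hU (hFU hx)
    exact ⟨n, ⋃₀ B', ⟨B', hB', hfin, hFB', rfl⟩, hB'U⟩
end

section
/- If a closure-preserving family of subsets of X is mapped forward by a continuous closed surjection f : X → Y, the resulting family of images is closure-preserving in Y; consequently, closed continuous surjections preserve s-m₂-spaces and s-σ-m₂-spaces. -/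
/-!
A continuous closed map satisfies `closure (f '' s) = f '' closure s`, so it commutes with both
sides of the closure-preservation identity. A quasi-base at `f ⁻¹' F` is pushed forward to a
quasi-base at `F`: since `f` is closed, the points whose whole fibre lies in `interior B` form an
open set, which contains `F` and, by surjectivity, lies in `f '' B`.
-/

open Set Topology Cardinal

/-- `X` is s-σ-m₂: every closed set has a σ-closure-preserving local quasi-base. -/
def SSigmaM2 (X : Type*) [TopologicalSpace X] : Prop :=
  ∀ F : Set X, IsClosed F → ∃ Q : ℕ → Set (Set X),
    (∀ n, ClosurePreserving (Q n)) ∧ (∀ n, ∀ B ∈ Q n, F ⊆ interior B) ∧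
    (∀ U : Set X, IsOpen U → F ⊆ U → ∃ n, ∃ B ∈ Q n, B ⊆ U)

lemma Set.kernImage_subset_image {α β : Type*} {f : α → β} (hs : Function.Surjective f)
    (s : Set α) : kernImage f s ⊆ f '' s := fun y hy ↦
  let ⟨x, hx⟩ := hs y
  ⟨x, hy hx, hx⟩

section

variable {X Y : Type*} [TopologicalSpace X] [TopologicalSpace Y] {f : X → Y}

lemma IsClosedMap.subset_interior_image (hcl : IsClosedMap f) (hs : Function.Surjective f)
    {F : Set Y} {B : Set X} (h : f ⁻¹' F ⊆ interior B) : F ⊆ interior (f '' B) :=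
  calc F ⊆ kernImage f (interior B) := subset_kernImage_iff.2 h
    _ ⊆ interior (kernImage f B) := isClosedMap_iff_kernImage_interior.1 hcl
    _ ⊆ interior (f '' B) := interior_mono (Set.kernImage_subset_image hs B)

lemma ClosurePreserving.image (hc : Continuous f) (hcl : IsClosedMap f) {P : Set (Set X)}
    (hP : ClosurePreserving P) : ClosurePreserving ((fun B ↦ f '' B) '' P) := by
  intro P' hP'
  obtain ⟨P₀, hP₀, rfl⟩ := subset_image_iff.1 hP'
  calc closure (⋃₀ ((fun B ↦ f '' B) '' P₀))
      = f '' closure (⋃₀ P₀) := by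
        rw [← image_sUnion, hcl.closure_image_eq_of_continuous hc]
    _ = ⋃ B ∈ P₀, f '' closure B := by rw [hP P₀ hP₀, image_iUnion₂]
    _ = ⋃ C ∈ (fun B ↦ f '' B) '' P₀, closure C := by
        simp only [biUnion_image, hcl.closure_image_eq_of_continuous hc]
end

/-- Continuous closed surjections send closure-preserving families to closure-preserving
families, and consequently preserve s-m₂-spaces and s-σ-m₂-spaces. -/
theorem closed_map_closurePreserving_and_preserves_sM2 {X Y : Type*}
    [TopologicalSpace X] [TopologicalSpace Y] (f : X → Y)
    (hc : Continuous f) (hcl : IsClosedMap f) (hs : Function.Surjective f) :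
    (∀ P : Set (Set X), ClosurePreserving P → ClosurePreserving ((fun B => f '' B) '' P)) ∧
    (SM2 X → SM2 Y) ∧ (SSigmaM2 X → SSigmaM2 Y) := by
  refine ⟨fun P hP ↦ hP.image hc hcl, ?_, ?_⟩
  · intro h F hF
    obtain ⟨Q, hQint, hQbase, hQcp⟩ := h (f ⁻¹' F) (hF.preimage hc)
    refine ⟨(fun B ↦ f '' B) '' Q, forall_mem_image.2 fun B hB ↦
      hcl.subset_interior_image hs (hQint B hB), fun V hV hFV ↦ ?_, hQcp.image hc hcl⟩
    obtain ⟨B, hB, hBV⟩ := hQbase _ (hV.preimage hc) (preimage_mono hFV)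
    exact ⟨f '' B, mem_image_of_mem _ hB, image_subset_iff.2 hBV⟩
  · intro h F hF
    obtain ⟨Q, hQcp, hQint, hQbase⟩ := h (f ⁻¹' F) (hF.preimage hc)
    refine ⟨fun n ↦ (fun B ↦ f '' B) '' Q n, fun n ↦ (hQcp n).image hc hcl,
      fun n ↦ forall_mem_image.2 fun B hB ↦ hcl.subset_interior_image hs (hQint n B hB),
      fun V hV hFV ↦ ?_⟩
    obtain ⟨n, B, hB, hBV⟩ := hQbase _ (hV.preimage hc) (preimage_mono hFV)
    exact ⟨n, f '' B, mem_image_of_mem _ hB, image_subset_iff.2 hBV⟩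
end

section
/- Every monotonically normal T₁ space is an s-m₃-space: every closed subset has a cushioned local pairbase. -/
/-!
Take as pairs `(G(F, X ∖ U), U)` for the open sets `U ⊇ F`. If `x` lies outside every `U` of a
subfamily, monotonicity puts every `G(F, X ∖ U)` inside `G(F, {x})`, whose closure misses `x`;
if `x ∈ F`, no `U ⊇ F` can avoid `x`, so the subfamily is empty.
-/

open Set Topology Cardinal

namespace MonotoneNormality

variable {X : Type*} [TopologicalSpace X]

def pairbase (G : Set X → Set X → Set X) (F : Set X) : Set (Set X × Set X) :=
  {p | ∃ U : Set X, IsOpen U ∧ F ⊆ U ∧ p = (G F Uᶜ, U)}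

section

variable {G : Set X → Set X → Set X} {F : Set X}
  (hsep : ∀ H K : Set X, IsClosed H → IsClosed K → Disjoint H K →
    H ⊆ G H K ∧ closure (G H K) ⊆ Kᶜ)
include hsep

theorem subset_G_compl_subset {U : Set X} (hF : IsClosed F) (hU : IsOpen U) (hFU : F ⊆ U) :
    F ⊆ G F Uᶜ ∧ G F Uᶜ ⊆ U := by
  have hsepU := hsep F Uᶜ hF hU.isClosed_compl (disjoint_compl_right_iff_subset.2 hFU)
  rw [compl_compl] at hsepU
  exact ⟨hsepU.1, subset_closure.trans hsepU.2⟩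

theorem cushioned_pairbase [T1Space X] (hF : IsClosed F)
    (hmono : ∀ H K H' K' : Set X, IsClosed H → IsClosed K → Disjoint H K →
      IsClosed H' → IsClosed K' → Disjoint H' K' → H ⊆ H' → K' ⊆ K → G H K ⊆ G H' K') :
    Cushioned (pairbase G F) := by
  intro P' hP' x hx
  by_contra hxP
  simp only [mem_iUnion, not_exists] at hxP
  by_cases hxF : x ∈ F
  · have hP'_empty : P' = ∅ := eq_empty_of_forall_notMem fun p hp => by
      obtain ⟨U, -, hFU, rfl⟩ := hP' hp
      exact hxP _ hp (hFU hxF)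
    simp [hP'_empty] at hx
  · have hFx : Disjoint F {x} := disjoint_singleton_right.2 hxF
    have hsub : (⋃ p ∈ P', p.1) ⊆ G F {x} := iUnion₂_subset fun p hp => by
      obtain ⟨U, hU, hFU, rfl⟩ := hP' hp
      exact hmono F Uᶜ F {x} hF hU.isClosed_compl (disjoint_compl_right_iff_subset.2 hFU)
        hF isClosed_singleton hFx subset_rfl (singleton_subset_iff.2 (hxP _ hp))
    exact (hsep F {x} hF isClosed_singleton hFx).2 (closure_mono hsub hx) rfl

end

end MonotoneNormality

open MonotoneNormality in
theorem monotonicallyNormal_implies_sM3_general {X : Type*} [TopologicalSpace X] [T1Space X]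
    (G : Set X → Set X → Set X)
    (hopen : ∀ H K : Set X, IsClosed H → IsClosed K → Disjoint H K → IsOpen (G H K))
    (hsep : ∀ H K : Set X, IsClosed H → IsClosed K → Disjoint H K →
      H ⊆ G H K ∧ closure (G H K) ⊆ Kᶜ)
    (hmono : ∀ H K H' K' : Set X, IsClosed H → IsClosed K → Disjoint H K →
      IsClosed H' → IsClosed K' → Disjoint H' K' → H ⊆ H' → K' ⊆ K → G H K ⊆ G H' K') :
    SM3 X := by
  intro F hF
  refine ⟨pairbase G F, ?_, ?_, cushioned_pairbase hsep hF hmono⟩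
  · rintro p ⟨U, hU, hFU, rfl⟩
    exact ⟨hopen F Uᶜ hF hU.isClosed_compl (disjoint_compl_right_iff_subset.2 hFU),
      subset_G_compl_subset hsep hF hU hFU⟩
  · exact fun U hU hFU => ⟨(G F Uᶜ, U), ⟨U, hU, hFU, rfl⟩, subset_rfl⟩

/-- Every monotonically normal T₁ space is an s-m₃-space. -/
theorem monotonicallyNormal_implies_sM3 {X : Type*} [TopologicalSpace X] [T1Space X]
    (G : Set X → Set X → Set X)
    (hopen : ∀ H K : Set X, IsClosed H → IsClosed K → Disjoint H K → IsOpen (G H K))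
    (hsep : ∀ H K : Set X, IsClosed H → IsClosed K → Disjoint H K →
      H ⊆ G H K ∧ closure (G H K) ⊆ Kᶜ)
    (hmono : ∀ H K H' K' : Set X, IsClosed H → IsClosed K → Disjoint H K →
      IsClosed H' → IsClosed K' → Disjoint H' K' → H ⊆ H' → K' ⊆ K → G H K ⊆ G H' K')
    (hdisj : ∀ H K : Set X, IsClosed H → IsClosed K → Disjoint H K →
      G H K ∩ G K H = ∅) :
    SM3 X :=
  monotonicallyNormal_implies_sM3_general G hopen hsep hmono
end

section
/- Suppose a space X has, at a point x, a σ-cushioned local pairbase, and κ is an infinite cardinal such that some open neighborhood U of x has cellularity at most κ. Then the tightness of X at x is at most κ: for every set A ⊆ X with x ∈ cl(A), there exists B ⊆ A with |B| ≤ κ and x ∈ cl(B). -/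
/-!
It suffices to find, for each cushioned layer `𝒫ₙ`, a set `Bₙ ⊆ A` of size `≤ κ` meeting `p.2` for
every `p ∈ 𝒫ₙ` with `p.2 ⊆ U` and `p.1 ∩ A ≠ ∅`; then `x ∈ cl (⋃ₙ Bₙ)`. If there is no such `Bₙ`,
a recursion of length `κ⁺` produces points `a_α ∈ A` and pairs `p_α ∈ 𝒫ₙ` with `a_α ∈ p_α.1` and
`a_β ∉ p_α.2` for `β < α`. Cushioning keeps `a_α` out of `cl (⋃_{γ > α} p_γ.1)`, so the open sets
`p_α.1 \ cl (⋃_{γ > α} p_γ.1)` are nonempty and pairwise disjoint: `κ⁺` cells inside `U`.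
-/

open Set Topology Cardinal Function

universe u

/-- `X` is σ-m₃ at `x`: there is a σ-cushioned local pairbase at `x`. -/
def SigmaM3At {X : Type*} [TopologicalSpace X] (x : X) : Prop :=
  ∃ P : ℕ → Set (Set X × Set X),
    (∀ n, Cushioned (P n)) ∧
    (∀ n, ∀ p ∈ P n, IsOpen p.1 ∧ p.1 ⊆ p.2) ∧
    (∀ U : Set X, IsOpen U → x ∈ U → ∃ n, ∃ p ∈ P n, x ∈ p.1 ∧ p.2 ⊆ U)

theorem Cardinal.mk_iUnion_nat_le {α : Type u} {κ : Cardinal.{u}} (hκ : ℵ₀ ≤ κ)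
    {s : ℕ → Set α} (hs : ∀ n, #(s n) ≤ κ) : #(⋃ n, s n) ≤ κ := by
  have := mk_iUnion_le_lift.{u, 0} s
  rw [lift_uzero, mk_nat, lift_aleph0] at this
  calc #(⋃ n, s n) ≤ ℵ₀ * ⨆ n, lift.{0} #(s n) := this
    _ ≤ ℵ₀ * κ := by gcongr; exact ciSup_le' fun n => by simpa using hs n
    _ = κ := aleph0_mul_eq hκ

theorem exists_seq_forall_image_Iio {ι β : Type u} [LinearOrder ι] [WellFoundedLT ι]
    {κ : Cardinal.{u}} (hι : ∀ i : ι, #(Iio i) ≤ κ) (Q : Set β → β → Prop)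
    (hQ : ∀ s : Set β, #s ≤ κ → ∃ b, Q s b) : ∃ g : ι → β, ∀ i, Q (g '' Iio i) (g i) := by
  let F : ∀ i, (∀ j < i, β) → β := fun i g =>
    (hQ (range fun j : Iio i => g j j.2) (mk_range_le.trans (hι i))).choose
  refine ⟨wellFounded_lt.fix F, fun i => ?_⟩
  rw [wellFounded_lt.fix_eq, image_eq_range]
  exact (hQ _ (mk_range_le.trans (hι i))).choose_spec

theorem pairwise_disjoint_sdiff_closure_biUnion_gt {X ι : Type*} [TopologicalSpace X]
    [LinearOrder ι] (s : ι → Set X) :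
    Pairwise (Disjoint on fun i => s i \ closure (⋃ j > i, s j)) := by
  refine (pairwise_disjoint_on _).2 fun i j hij => disjoint_left.2 fun y hyi hyj => hyi.2 ?_
  exact subset_closure (mem_biUnion hij hyj.1)

section

variable {X : Type u} [TopologicalSpace X]

theorem Cushioned.closure_biUnion_subset {ι : Type*} {P : Set (Set X × Set X)}
    (hP : Cushioned P) {p : ι → Set X × Set X} {S : Set ι} (hp : ∀ j ∈ S, p j ∈ P) :
    closure (⋃ j ∈ S, (p j).1) ⊆ ⋃ j ∈ S, (p j).2 := by
  simpa only [biUnion_image] using hP (p '' S) (image_subset_iff.2 hp)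

def CellularityLE (U : Set X) (κ : Cardinal.{u}) : Prop :=
  ∀ C : Set (Set X), (∀ V ∈ C, IsOpen V ∧ V.Nonempty ∧ V ⊆ U) → C.PairwiseDisjoint id → #C ≤ κ

theorem CellularityLE.mk_le {U : Set X} {κ : Cardinal.{u}} (hU : CellularityLE U κ)
    {ι : Type u} {O : ι → Set X} (hO : ∀ i, IsOpen (O i) ∧ (O i).Nonempty ∧ O i ⊆ U)
    (hd : Pairwise (Disjoint on O)) : #ι ≤ κ := by
  have hinj : Injective O := fun i j hij => by
    by_contra hne
    have : Disjoint (O i) (O j) := hd hne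
    rw [hij, disjoint_self, bot_eq_empty] at this
    exact (hO j).2.1.ne_empty this
  rw [← mk_range_eq O hinj]
  exact hU _ (forall_mem_range.2 hO)
    (pairwiseDisjoint_range_iff.2 fun i j hne => hd (ne_of_apply_ne O hne))

theorem Cushioned.exists_subset_mk_le_forall_inter_nonempty {P : Set (Set X × Set X)}
    (hP : Cushioned P) (hpair : ∀ p ∈ P, IsOpen p.1 ∧ p.1 ⊆ p.2) {U : Set X}
    {κ : Cardinal.{u}} (hcell : CellularityLE U κ) (A : Set X) :
    ∃ B ⊆ A, #B ≤ κ ∧ ∀ p ∈ P, p.2 ⊆ U → (p.1 ∩ A).Nonempty → (p.2 ∩ B).Nonempty := by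
  by_contra! hcon
  let Q : Set (A × (Set X × Set X)) → A × (Set X × Set X) → Prop := fun s z =>
    z.2 ∈ P ∧ z.2.2 ⊆ U ∧ (z.1 : X) ∈ z.2.1 ∧ ∀ w ∈ s, (w.1 : X) ∉ z.2.2
  have hstep (s : Set (A × (Set X × Set X))) (hs : #s ≤ κ) : ∃ z, Q s z := by
    obtain ⟨p, hpP, hpU, ⟨a, hap, haA⟩, hpB⟩ :=
      hcon ((fun w => (w.1 : X)) '' s) (by rintro _ ⟨w, -, rfl⟩; exact w.1.2)
        (mk_image_le.trans hs)
    exact ⟨(⟨a, haA⟩, p), hpP, hpU, hap, fun w hw hwp => hpB.subset ⟨hwp, mem_image_of_mem _ hw⟩⟩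
  obtain ⟨g, hg⟩ := exists_seq_forall_image_Iio (ι := (Order.succ κ).ord.ToType)
    (fun i => Order.lt_succ_iff.1 (by simpa using mk_Iio_lt i)) Q hstep
  set p := fun i => (g i).2
  have hmem (i) : ((g i).1 : X) ∈ (p i).1 \ closure (⋃ j > i, (p j).1) := by
    refine ⟨(hg i).2.2.1, fun hcl => ?_⟩
    obtain ⟨j, hij, hj⟩ := mem_iUnion₂.1 (hP.closure_biUnion_subset (fun j _ => (hg j).1) hcl)
    exact (hg j).2.2.2 (g i) (mem_image_of_mem g hij) hj
  have := hcell.mk_le (fun i => ⟨(hpair _ (hg i).1).1.sdiff isClosed_closure, ⟨_, hmem i⟩,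
    sdiff_subset.trans ((hpair _ (hg i).1).2.trans (hg i).2.1)⟩)
    (pairwise_disjoint_sdiff_closure_biUnion_gt fun i => (p i).1)
  exact (Order.lt_succ κ).not_ge (by rwa [mk_ord_toType] at this)

end

/-- If `X` is σ-m₃ at `x` and some open neighborhood `U` of `x` has cellularity at most
the infinite cardinal `κ`, then the tightness of `X` at `x` is at most `κ`. -/
theorem sigmaM3_at_tightness_le_cellularity {X : Type u} [TopologicalSpace X]
    (x : X) (h : SigmaM3At x) (κ : Cardinal.{u}) (hκ : ℵ₀ ≤ κ)
    (U : Set X) (hU : IsOpen U) (hxU : x ∈ U)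
    (hcell : ∀ C : Set (Set X), (∀ V ∈ C, IsOpen V ∧ V.Nonempty ∧ V ⊆ U) →
      C.PairwiseDisjoint id → #C ≤ κ) :
    ∀ A : Set X, x ∈ closure A → ∃ B ⊆ A, #B ≤ κ ∧ x ∈ closure B := by
  obtain ⟨P, hcush, hpair, hbase⟩ := h
  intro A hxA
  choose B hBA hBκ hBmeet using fun n =>
    (hcush n).exists_subset_mk_le_forall_inter_nonempty (hpair n) hcell A
  refine ⟨⋃ n, B n, iUnion_subset hBA, mk_iUnion_nat_le hκ hBκ,
    mem_closure_iff.2 fun G hG hxG => ?_⟩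
  obtain ⟨n, p, hp, hxp, hpG⟩ := hbase (U ∩ G) (hU.inter hG) ⟨hxU, hxG⟩
  obtain ⟨b, hbp, hbB⟩ := hBmeet n p hp (hpG.trans inter_subset_left)
    (mem_closure_iff.1 hxA _ (hpair n p hp).1 hxp)
  exact ⟨b, (hpG hbp).2, mem_iUnion.2 ⟨n, hbB⟩⟩
end

section
/- Let X be a separable space with the Baire property (every countable intersection of dense open sets is dense), and suppose X has a σ-cushioned local pairbase at a point x. Then X has countable π-character at x: there exists a countable family 𝒰 of non-empty open sets such that every open neighborhood of x contains a member of 𝒰. -/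
/-!
Fix a countable dense set `D`. The non-empty sets `interior (closure (core (P n) d))`, `d ∈ D`,
form the countable local π-base, where `core (P n) d` is the intersection of the second
coordinates of the pairs of `P n` whose first coordinate contains `d`. Given a
neighbourhood `U` of `x`, pick `x ∈ p.1 ⊆ p.2 ⊆ U` and then `x ∈ q.1 ⊆ q.2 ⊆ p.1` with `q ∈ P m`.
Cushioning shows that the countably many sets `core (P m) d`, `d ∈ D ∩ q.1`, cover the open set
`q.1`, so by the Baire property one of them is somewhere dense; its closure lies in
`closure q.2 ⊆ closure p.1 ⊆ p.2 ⊆ U`.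
-/

open Set Topology Cardinal

theorem exists_nonempty_interior_closure_of_subset_biUnion {X ι : Type*} [TopologicalSpace X]
    [BaireSpace X] {S : Set ι} (hS : S.Countable) {f : ι → Set X} {W : Set X} (hW : IsOpen W)
    (hne : W.Nonempty) (hcover : W ⊆ ⋃ i ∈ S, f i) :
    ∃ i ∈ S, (interior (closure (f i))).Nonempty := by
  by_contra! h
  have hmeagre : IsMeagre (⋃ i ∈ S, f i) :=
    isMeagre_biUnion hS fun i hi => IsNowhereDense.isMeagre (h i hi)
  exact not_isMeagre_of_isOpen hW hne (hmeagre.mono hcover)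

namespace Cushioned

variable {X : Type*}

def core (P : Set (Set X × Set X)) (d : X) : Set X :=
  ⋂ p ∈ P, ⋂ (_ : d ∈ p.1), p.2

theorem core_subset_snd {P : Set (Set X × Set X)} {p : Set X × Set X} {d : X} (hp : p ∈ P)
    (hd : d ∈ p.1) : core P d ⊆ p.2 :=
  (biInter_subset_of_mem hp).trans (iInter_subset _ hd)

variable [TopologicalSpace X]

theorem closure_fst_subset_snd {P : Set (Set X × Set X)} (hP : Cushioned P)
    {p : Set X × Set X} (hp : p ∈ P) : closure p.1 ⊆ p.2 := by
  simpa using hP {p} (singleton_subset_iff.2 hp)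

/-- By cushioning, the union of the first coordinates of the pairs whose second coordinate misses
`z` has closure missing `z`, so a `d ∈ D` close enough to `z` lies in none of them. -/
theorem exists_mem_core {P : Set (Set X × Set X)} (hP : Cushioned P) {D W : Set X}
    (hD : Dense D) (hW : IsOpen W) {z : X} (hz : z ∈ W) : ∃ d ∈ D ∩ W, z ∈ core P d := by
  set F := closure (⋃ p ∈ {p ∈ P | z ∉ p.2}, p.1)
  have hzF : z ∉ F := fun hzF => by
    obtain ⟨p, hp, hzp⟩ := mem_iUnion₂.1 (hP _ (sep_subset _ _) hzF)
    exact hp.2 hzp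
  obtain ⟨d, ⟨hdF, hdW⟩, hdD⟩ :=
    hD.inter_open_nonempty _ (isClosed_closure.isOpen_compl.inter hW) ⟨z, hzF, hz⟩
  refine ⟨d, ⟨hdD, hdW⟩, mem_iInter₂.2 fun p hp => mem_iInter.2 fun hdp => ?_⟩
  by_contra hzp
  exact hdF (subset_closure (mem_iUnion₂.2 ⟨p, ⟨hp, hzp⟩, hdp⟩))

theorem exists_nonempty_interior_closure_core [BaireSpace X] {P : Set (Set X × Set X)}
    (hP : Cushioned P) {D W : Set X} (hDc : D.Countable) (hD : Dense D) (hW : IsOpen W)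
    (hne : W.Nonempty) : ∃ d ∈ D ∩ W, (interior (closure (core P d))).Nonempty :=
  exists_nonempty_interior_closure_of_subset_biUnion (hDc.mono inter_subset_left) hW hne
    fun _ hz =>
      let ⟨d, hd, hzd⟩ := hP.exists_mem_core hD hW hz
      mem_iUnion₂.2 ⟨d, hd, hzd⟩

end Cushioned

open Cushioned in
/-- A separable Baire space which is σ-m₃ at a point `x` has countable π-character at `x`. -/
theorem separable_baire_sigmaM3_pi_character {X : Type*} [TopologicalSpace X]
    [TopologicalSpace.SeparableSpace X] [BaireSpace X]
    (x : X) (h : SigmaM3At x) :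
    ∃ 𝒰 : Set (Set X), 𝒰.Countable ∧ (∀ V ∈ 𝒰, IsOpen V ∧ V.Nonempty) ∧
      ∀ U : Set X, IsOpen U → x ∈ U → ∃ V ∈ 𝒰, V ⊆ U := by
  obtain ⟨P, hcush, hpair, hbase⟩ := h
  obtain ⟨D, hDc, hD⟩ := TopologicalSpace.exists_countable_dense X
  refine ⟨{V ∈ ⋃ n, (fun d => interior (closure (core (P n) d))) '' D | V.Nonempty},
    (countable_iUnion fun n => hDc.image _).mono (sep_subset _ _), ?_, ?_⟩
  · rintro V ⟨hV, hne⟩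
    obtain ⟨n, d, -, rfl⟩ := mem_iUnion.1 hV
    exact ⟨isOpen_interior, hne⟩
  · intro U hU hxU
    obtain ⟨n, p, hp, hxp, hpU⟩ := hbase U hU hxU
    obtain ⟨m, q, hq, hxq, hqp⟩ := hbase p.1 (hpair n p hp).1 hxp
    obtain ⟨d, ⟨hdD, hdq⟩, hne⟩ :=
      (hcush m).exists_nonempty_interior_closure_core hDc hD (hpair m q hq).1 ⟨x, hxq⟩
    refine ⟨_, ⟨mem_iUnion.2 ⟨m, d, hdD, rfl⟩, hne⟩, ?_⟩
    calc interior (closure (core (P m) d)) ⊆ closure q.2 :=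
          interior_subset.trans (closure_mono (core_subset_snd hq hdq))
      _ ⊆ closure p.1 := closure_mono hqp
      _ ⊆ U := ((hcush n).closure_fst_subset_snd hp).trans hpU
end
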